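/- arXiv:0712.3873 — 7 statements merged into one kernel-verified Lean document; each statement's English description precedes it below -/
import Mathlib

section
/- Let k be an algebraically closed field of characteristic different from 2 and 3, and fix M = 3 or M = 4. Let f, g ∈ k[T] be polynomials with deg(f) = 2M and deg(g) = 3M. If f³ ≠ g², then deg(f³ − g²) ≥ M + 1. -/
open Polynomial

/-!
Suppose `h = f³ - g²` had degree at most `M`. Then `g h' - 2 g' h = f² (3 f' g - 2 f g')` has degree
below `4M = deg f²`, so it vanishes: the Wronskian of `g²` and `h` is zero, which forces `g² = h u`
and `f³ = h (u + 1)` with `u' = 0`. In characteristic zero `u` is constant, which the degrees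
forbid. In characteristic `p ≥ 5` we get `u = Uᵖ` and `u + 1 = (U + 1)ᵖ` with `1 ≤ deg U ≤ 4 < p`,
so `U' ≠ 0`. Comparing multiplicities in `g² = h Uᵖ` and `f³ = h (U + 1)ᵖ`, a simple root of `U` is
a root of `h` of multiplicity at least 3 and a root of `U + 1` of multiplicity prime to 3 is a root
of `h` of multiplicity at least 2. Since `U'` is also the derivative of `U + 1`, the Mason–Stothers
count gives `U (U + 1)` at least `deg U + 1` distinct roots. Together these yield
`deg U + 6 ≤ 2 deg h`, which is incompatible with `deg h + p deg U = 6M`.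
-/

theorem natCast_ne_zero_of_le_four {k : Type*} [Field k] (h2 : (2 : k) ≠ 0) (h3 : (3 : k) ≠ 0)
    {j : ℕ} (hj : j ≤ 4) (hj0 : j ≠ 0) : (j : k) ≠ 0 := by
  have h4 : (4 : k) ≠ 0 := by
    rw [show (4 : k) = 2 * 2 by norm_num]
    exact mul_ne_zero h2 h2
  interval_cases j <;> simp_all

theorem not_dvd_of_natCast_ne_zero {k : Type*} [Field k] {p q : ℕ} [CharP k p] (hp : p.Prime)
    (hq : q.Prime) (hqk : (q : k) ≠ 0) : ¬ q ∣ p := fun hdvd =>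
  hqk ((CharP.cast_eq_zero_iff k p q).mpr ((Nat.prime_dvd_prime_iff_eq hq hp).mp hdvd ▸ dvd_rfl))

-- `a, b, e, mU, mV` are the multiplicities at one point of `f, g, h, U, U + 1`.
theorem six_le_of_cube_eq_of_sq_eq {p mU mV e a b : ℕ} (hp2 : ¬ 2 ∣ p) (hp3 : ¬ 3 ∣ p)
    (ha : 3 * a = e + p * mV) (hb : 2 * b = e + p * mU) (hUV : mU = 0 ∨ mV = 0)
    (hpos : mU + mV ≠ 0) : 6 ≤ 3 * mU + 2 * mV + 2 * e := by
  by_contra! hlt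
  rcases hUV with rfl | rfl
  · obtain rfl | rfl : mV = 1 ∨ mV = 2 := by omega
    all_goals omega
  · obtain rfl : mU = 1 := by omega
    omega

namespace Polynomial

variable {k : Type*} [Field k]

theorem natCast_natDegree_eq_zero_of_derivative_eq_zero {w : k[X]} (hw : derivative w = 0)
    (hw0 : w ≠ 0) : (w.natDegree : k) = 0 := by
  rcases Nat.eq_zero_or_pos w.natDegree with h0 | hpos
  · simp [h0]
  have hcoeff := coeff_derivative w (w.natDegree - 1)
  rw [hw, coeff_zero, ← Nat.cast_add_one, Nat.sub_add_cancel hpos, coeff_natDegree] at hcoeff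
  exact (mul_eq_zero.mp hcoeff.symm).resolve_left (leadingCoeff_ne_zero.mpr hw0)

theorem exists_pow_eq_of_derivative_eq_zero (p : ℕ) [ExpChar k p] [PerfectRing k p] {u : k[X]}
    (hu : derivative u = 0) : ∃ U : k[X], U ^ p = u := by
  obtain ⟨U, hU⟩ := map_surjective _ (surjective_frobenius k p) (contract p u)
  exact ⟨U, by rw [← map_frobenius_expand, map_expand, hU, expand_contract' p hu]⟩

theorem rootMultiplicity_pow (p : k[X]) (n : ℕ) (a : k) :
    rootMultiplicity a (p ^ n) = n * rootMultiplicity a p := by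
  classical
  rw [← count_roots, roots_pow, Multiset.count_nsmul, count_roots]

theorem sum_rootMultiplicity_le_natDegree (p : k[X]) (s : Finset k) :
    ∑ a ∈ s, rootMultiplicity a p ≤ p.natDegree := by
  classical
  calc ∑ a ∈ s, rootMultiplicity a p
      ≤ ∑ a ∈ s ∪ p.roots.toFinset, p.roots.count a := by
        simp only [count_roots]
        exact Finset.sum_le_sum_of_subset Finset.subset_union_left
    _ = p.roots.card := Multiset.sum_count_eq_card fun a ha =>
        Finset.mem_union_right _ (Multiset.mem_toFinset.mpr ha)
    _ ≤ p.natDegree := card_roots' p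

theorem sum_rootMultiplicity_eq_natDegree [IsAlgClosed k] {p : k[X]} {s : Finset k}
    (hs : ∀ a ∈ p.roots, a ∈ s) : ∑ a ∈ s, rootMultiplicity a p = p.natDegree := by
  classical
  simp only [← count_roots]
  rw [Multiset.sum_count_eq_card hs, IsAlgClosed.card_roots_eq_natDegree]

theorem wronskian_mul_mul (d u w : k[X]) :
    wronskian (d * u) (d * w) = d ^ 2 * wronskian u w := by
  simp only [wronskian, derivative_mul]
  ring

theorem exists_eq_mul_of_wronskian_eq_zero {x y : k[X]} (hy : y ≠ 0) (hw : wronskian x y = 0) :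
    ∃ d u w : k[X], x = d * u ∧ y = d * w ∧ derivative u = 0 ∧ derivative w = 0 := by
  classical
  set d := gcd x y
  have hd : d ≠ 0 := gcd_ne_zero_of_right hy
  have hx : x = d * (x / d) := (EuclideanDomain.mul_div_cancel' hd (gcd_dvd_left x y)).symm
  have hy' : y = d * (y / d) := (EuclideanDomain.mul_div_cancel' hd (gcd_dvd_right x y)).symm
  have hcop : IsCoprime (x / d) (y / d) := isCoprime_div_gcd_div_gcd hy
  refine ⟨d, x / d, y / d, hx, hy', hcop.wronskian_eq_zero_iff.mp ?_⟩
  rw [hx, hy', wronskian_mul_mul] at hw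
  exact (mul_eq_zero.mp hw).resolve_left (pow_ne_zero 2 hd)

theorem exists_eq_mul_derivative_eq_zero_of_wronskian_eq_zero {x y : k[X]} (hy : y ≠ 0)
    (hw : wronskian x y = 0) (hchar : ∀ j ≤ y.natDegree, j ≠ 0 → (j : k) ≠ 0) :
    ∃ u : k[X], derivative u = 0 ∧ x = y * u := by
  obtain ⟨d, u, w, rfl, rfl, hu, hw⟩ := exists_eq_mul_of_wronskian_eq_zero hy hw
  have hd : d ≠ 0 := left_ne_zero_of_mul hy
  have hw0 : w ≠ 0 := right_ne_zero_of_mul hy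
  have hdeg : w.natDegree = 0 := by
    by_contra hne
    exact hchar _ (natDegree_mul hd hw0 ▸ Nat.le_add_left _ _) hne
      (natCast_natDegree_eq_zero_of_derivative_eq_zero hw hw0)
  rw [eq_C_of_natDegree_eq_zero hdeg] at hw0 ⊢
  have hc : w.coeff 0 ≠ 0 := fun h => hw0 (by rw [h, C_0])
  refine ⟨C (w.coeff 0)⁻¹ * u, by simp [hu], ?_⟩
  rw [mul_assoc, ← mul_assoc (C _), ← C_mul, mul_inv_cancel₀ hc, C_1, one_mul]

theorem wronskian_sq_cube_sub_sq_eq_zero {f g : k[X]} {M : ℕ} (hM : 0 < M)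
    (hf : f.natDegree = 2 * M) (hg : g.natDegree = 3 * M)
    (hh : (f ^ 3 - g ^ 2).natDegree ≤ M) : wronskian (g ^ 2) (f ^ 3 - g ^ 2) = 0 := by
  set h := f ^ 3 - g ^ 2
  set E := g * derivative h - 2 * derivative g * h
  have hE : E = f ^ 2 * (3 * derivative f * g - 2 * f * derivative g) := by
    simp only [E, h, derivative_sub, derivative_pow, Nat.cast_ofNat, map_ofNat]
    ring
  have hEdeg : E.natDegree < 4 * M := by
    have h1 := natDegree_derivative_le h
    have h2 := natDegree_derivative_le g
    refine (natDegree_sub_le _ _).trans_lt (max_lt ?_ ?_)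
    · exact natDegree_mul_le.trans_lt (by omega)
    · refine natDegree_mul_le.trans_lt ?_
      have := natDegree_mul_le (p := (2 : k[X])) (q := derivative g)
      rw [natDegree_ofNat] at this
      omega
  have hE0 : E = 0 := by
    by_contra hE0
    have := natDegree_le_of_dvd (hE ▸ dvd_mul_right _ _) hE0
    rw [natDegree_pow, hf] at this
    omega
  calc wronskian (g ^ 2) h = g * E := by
        simp only [wronskian, E, derivative_pow, Nat.cast_ofNat, map_ofNat]
        ring
    _ = 0 := by rw [hE0, mul_zero]

theorem natDegree_add_one (U : k[X]) : (U + 1).natDegree = U.natDegree := by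
  rw [← C_1, natDegree_add_C]

theorem rootMultiplicity_eq_zero_or_rootMultiplicity_add_one_eq_zero (U : k[X]) (q : k) :
    rootMultiplicity q U = 0 ∨ rootMultiplicity q (U + 1) = 0 := by
  by_cases hq : U.IsRoot q
  · exact Or.inr (rootMultiplicity_eq_zero (by simp [hq.eq_zero]))
  · exact Or.inl (rootMultiplicity_eq_zero hq)

theorem natDegree_lt_card_of_roots_subset [IsAlgClosed k] {U : k[X]} (hU : derivative U ≠ 0)
    {S : Finset k} (hSU : ∀ q ∈ U.roots, q ∈ S) (hSV : ∀ q ∈ (U + 1).roots, q ∈ S) :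
    U.natDegree < S.card := by
  have hV' : derivative (U + 1) = derivative U := by simp
  have hsumU' : ∑ q ∈ S, rootMultiplicity q (derivative U) ≤ U.natDegree - 1 :=
    (sum_rootMultiplicity_le_natDegree _ S).trans (natDegree_derivative_le U)
  have hd : U.natDegree ≠ 0 := fun h0 => hU (derivative_of_natDegree_zero h0)
  have : 2 * U.natDegree ≤ U.natDegree - 1 + S.card :=
    calc 2 * U.natDegree = ∑ q ∈ S, (rootMultiplicity q U + rootMultiplicity q (U + 1)) := by
          rw [Finset.sum_add_distrib, sum_rootMultiplicity_eq_natDegree hSU,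
            sum_rootMultiplicity_eq_natDegree hSV, natDegree_add_one, two_mul]
      _ ≤ ∑ q ∈ S, (rootMultiplicity q (derivative U) + 1) := by
          refine Finset.sum_le_sum fun q _ => ?_
          have hdU := rootMultiplicity_sub_one_le_derivative_rootMultiplicity_of_ne_zero U q hU
          have hdV := rootMultiplicity_sub_one_le_derivative_rootMultiplicity_of_ne_zero (U + 1) q
            (hV' ▸ hU)
          rw [hV'] at hdV
          have := rootMultiplicity_eq_zero_or_rootMultiplicity_add_one_eq_zero U q
          omega
      _ ≤ U.natDegree - 1 + S.card := by
          rw [Finset.sum_add_distrib, Finset.card_eq_sum_ones]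
          omega
  omega

theorem natDegree_add_six_le_two_mul_natDegree [IsAlgClosed k] {p : ℕ} (hp2 : ¬ 2 ∣ p)
    (hp3 : ¬ 3 ∣ p) {f g h U : k[X]} (hh : h ≠ 0) (hU : derivative U ≠ 0)
    (hf : f ^ 3 = h * (U + 1) ^ p) (hg : g ^ 2 = h * U ^ p) :
    U.natDegree + 6 ≤ 2 * h.natDegree := by
  classical
  have hU0 : U ≠ 0 := fun h0 => hU (by rw [h0, derivative_zero])
  have hV0 : U + 1 ≠ 0 := fun h0 => hU (by simpa using congrArg derivative h0)
  have hmf (q : k) :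
      3 * rootMultiplicity q f = rootMultiplicity q h + p * rootMultiplicity q (U + 1) := by
    rw [← rootMultiplicity_pow, hf, rootMultiplicity_mul (mul_ne_zero hh (pow_ne_zero _ hV0)),
      rootMultiplicity_pow]
  have hmg (q : k) :
      2 * rootMultiplicity q g = rootMultiplicity q h + p * rootMultiplicity q U := by
    rw [← rootMultiplicity_pow, hg, rootMultiplicity_mul (mul_ne_zero hh (pow_ne_zero _ hU0)),
      rootMultiplicity_pow]
  set S := U.roots.toFinset ∪ (U + 1).roots.toFinset
  have hSU (q : k) (hq : q ∈ U.roots) : q ∈ S :=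
    Finset.mem_union_left _ (Multiset.mem_toFinset.mpr hq)
  have hSV (q : k) (hq : q ∈ (U + 1).roots) : q ∈ S :=
    Finset.mem_union_right _ (Multiset.mem_toFinset.mpr hq)
  have hS (q : k) (hq : q ∈ S) : rootMultiplicity q U + rootMultiplicity q (U + 1) ≠ 0 := by
    simp only [S, Finset.mem_union, Multiset.mem_toFinset, mem_roots'] at hq
    rcases hq with ⟨-, hq⟩ | ⟨-, hq⟩
    · have := (rootMultiplicity_pos hU0).mpr hq
      omega
    · have := (rootMultiplicity_pos hV0).mpr hq
      omega
  have hweight : 6 * S.card ≤ 5 * U.natDegree + 2 * h.natDegree :=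
    calc 6 * S.card = ∑ q ∈ S, 6 := by rw [Finset.sum_const, smul_eq_mul, mul_comm]
      _ ≤ ∑ q ∈ S, (3 * rootMultiplicity q U + 2 * rootMultiplicity q (U + 1)
            + 2 * rootMultiplicity q h) :=
          Finset.sum_le_sum fun q hq => six_le_of_cube_eq_of_sq_eq hp2 hp3 (hmf q) (hmg q)
            (rootMultiplicity_eq_zero_or_rootMultiplicity_add_one_eq_zero U q) (hS q hq)
      _ ≤ 5 * U.natDegree + 2 * h.natDegree := by
          simp only [Finset.sum_add_distrib, ← Finset.mul_sum,
            sum_rootMultiplicity_eq_natDegree hSU, sum_rootMultiplicity_eq_natDegree hSV,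
            natDegree_add_one]
          have := sum_rootMultiplicity_le_natDegree h S
          omega
  have := natDegree_lt_card_of_roots_subset hU hSU hSV
  omega

theorem exists_natDegree_eq_mul_add_six_le [IsAlgClosed k] {p : ℕ} [CharP k p] (hp : p.Prime)
    (hp2 : ¬ 2 ∣ p) (hp3 : ¬ 3 ∣ p) {f g h u : k[X]} (hh : h ≠ 0) (hu : derivative u = 0)
    (hu0 : 0 < u.natDegree) (hup : u.natDegree < p ^ 2) (hf : f ^ 3 = h * (u + 1))
    (hg : g ^ 2 = h * u) : ∃ d, u.natDegree = p * d ∧ d + 6 ≤ 2 * h.natDegree := by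
  have : Fact p.Prime := ⟨hp⟩
  obtain ⟨U, rfl⟩ := exists_pow_eq_of_derivative_eq_zero p hu
  rw [natDegree_pow] at hu0 hup ⊢
  have hU : derivative U ≠ 0 := by
    intro hU
    have hdvd := (CharP.cast_eq_zero_iff k p _).mp
      (natCast_natDegree_eq_zero_of_derivative_eq_zero hU (by rintro rfl; simp at hu0))
    have := Nat.le_of_dvd (Nat.pos_of_mul_pos_left hu0) hdvd
    nlinarith
  rw [← one_pow p, ← add_pow_char] at hf
  exact ⟨U.natDegree, rfl, natDegree_add_six_le_two_mul_natDegree hp2 hp3 hh hU hf hg⟩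

end Polynomial

/-- If `k` is algebraically closed of characteristic different from 2 and 3, `M = 3` or `4`,
`f, g ∈ k[T]` with `deg f = 2M`, `deg g = 3M` and `f³ ≠ g²`, then `deg(f³ - g²) ≥ M + 1`. -/
theorem deg_f_cubed_sub_g_squared_ge (k : Type*) [Field k] [IsAlgClosed k]
    (h2 : (2 : k) ≠ 0) (h3 : (3 : k) ≠ 0)
    (M : ℕ) (hM : M = 3 ∨ M = 4)
    (f g : k[X]) (hf : f.natDegree = 2 * M) (hg : g.natDegree = 3 * M)
    (hne : f ^ 3 ≠ g ^ 2) :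
    M + 1 ≤ (f ^ 3 - g ^ 2).natDegree := by
  set h := f ^ 3 - g ^ 2 with hh_def
  by_contra! hlt
  have hh : h ≠ 0 := sub_ne_zero.mpr hne
  obtain ⟨u, hu, hgu⟩ := exists_eq_mul_derivative_eq_zero_of_wronskian_eq_zero hh
    (wronskian_sq_cube_sub_sq_eq_zero (by omega) hf hg (Nat.lt_succ_iff.mp hlt))
    fun j hj => natCast_ne_zero_of_le_four h2 h3 (by omega)
  have hfu : f ^ 3 = h * (u + 1) := by rw [mul_add, ← hgu, hh_def]; ring
  have hg0 : g ≠ 0 := ne_zero_of_natDegree_gt (n := 0) (by omega)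
  have hdeg : h.natDegree + u.natDegree = 6 * M := by
    rw [← natDegree_mul hh (right_ne_zero_of_mul (hgu ▸ pow_ne_zero 2 hg0)), ← hgu,
      natDegree_pow, hg]
    ring
  obtain ⟨p, hchar⟩ := CharP.exists k
  rcases CharP.char_is_prime_or_zero k p with hp | rfl
  · have hp2 := not_dvd_of_natCast_ne_zero hp Nat.prime_two (by exact_mod_cast h2)
    have hp3 := not_dvd_of_natCast_ne_zero hp Nat.prime_three (by exact_mod_cast h3)
    have hp5 : 5 ≤ p := by have := hp.two_le; omega
    obtain ⟨d, hd, hd6⟩ := exists_natDegree_eq_mul_add_six_le hp hp2 hp3 hh hu (by omega)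
      (by rcases hM with rfl | rfl <;> nlinarith) hfu hgu
    -- `d ≤ 2` forces `deg h = 4` and `p * d = 20`, making `p` even
    have : d ≤ 2 := by omega
    interval_cases d <;> omega
  · have : CharZero k := CharP.charP_to_charZero k
    rw [derivative_eq_zero.mp hu] at hdeg
    omega
end

section
/- Let k be an algebraically closed field of characteristic different from 2 and 3, and fix M = 3 or M = 4. Then there exist polynomials f, g ∈ k[T] with deg(f) = 2M, deg(g) = 3M, f³ ≠ g², and deg(f³ − g²) = M + 1. -/
/-!
It suffices to exhibit monic integral pairs attaining Davenport's bound
`deg (f³ - g²) ≥ deg f / 2 + 1` for `deg f = 6` and `deg f = 8`: for the pairs below `f³ - g²` is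
`± 2ᵃ 3ᵇ` times a monic polynomial, and that scalar is nonzero outside characteristics 2 and 3.
-/

open Polynomial

theorem Polynomial.ne_of_natDegree_sub_ne_zero {R : Type*} [Ring R] {p q : R[X]}
    (h : (p - q).natDegree ≠ 0) : p ≠ q :=
  fun hpq => h (by simp [hpq])

theorem two_pow_mul_three_pow_ne_zero {R : Type*} [Semiring R] [NoZeroDivisors R]
    (h2 : (2 : R) ≠ 0) (h3 : (3 : R) ≠ 0) (a b : ℕ) :
    (2 : R) ^ a * 3 ^ b ≠ 0 :=
  mul_ne_zero (pow_ne_zero a h2) (pow_ne_zero b h3)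

namespace Davenport

variable {R : Type*} [CommRing R]

noncomputable def f₆ : R[X] := X ^ 6 + 16 * X ^ 4 + 160 * X ^ 2 + 384

noncomputable def g₉ : R[X] := X ^ 9 + 24 * X ^ 7 + 336 * X ^ 5 + 2240 * X ^ 3 + 8064 * X

noncomputable def f₈ : R[X] :=
  X ^ 8 + 84 * X ^ 6 + 176 * X ^ 5 + 2366 * X ^ 4 + 13536 * X ^ 3 + 26884 * X ^ 2 + 218864 * X
    + 268777

noncomputable def g₁₂ : R[X] :=
  X ^ 12 + 126 * X ^ 10 + 264 * X ^ 9 + 6195 * X ^ 8 + 31392 * X ^ 7 + 163956 * X ^ 6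
    + 1260528 * X ^ 5 + 3531639 * X ^ 4 + 19770400 * X ^ 3 + 62912622 * X ^ 2 + 94024776 * X
    + 291742453

theorem f₆_cube_sub_g₉_sq :
    (f₆ ^ 3 - g₉ ^ 2 : R[X]) = C (2 ^ 14 * 3 ^ 3) * (X ^ 4 + 13 * X ^ 2 + 128) := by
  simp only [f₆, g₉, map_mul, map_pow, C_ofNat]
  ring

theorem f₈_cube_sub_g₁₂_sq :
    (f₈ ^ 3 - g₁₂ ^ 2 : R[X]) =
      -(C (2 ^ 38 * 3 ^ 3) * (X ^ 5 + 62 * X ^ 3 + 148 * X ^ 2 + 1001 * X + 8852)) := by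
  simp only [f₈, g₁₂, map_mul, map_pow, C_ofNat]
  ring

section Nontrivial

variable [Nontrivial R]

theorem natDegree_f₆ : (f₆ : R[X]).natDegree = 6 := by
  unfold f₆; compute_degree!

theorem natDegree_g₉ : (g₉ : R[X]).natDegree = 9 := by
  unfold g₉; compute_degree!

theorem natDegree_f₈ : (f₈ : R[X]).natDegree = 8 := by
  unfold f₈; compute_degree!

theorem natDegree_g₁₂ : (g₁₂ : R[X]).natDegree = 12 := by
  unfold g₁₂; compute_degree!

end Nontrivial

section IsDomain

variable [IsDomain R]

theorem natDegree_f₆_cube_sub_g₉_sq (h2 : (2 : R) ≠ 0) (h3 : (3 : R) ≠ 0) :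
    (f₆ ^ 3 - g₉ ^ 2 : R[X]).natDegree = 4 := by
  rw [f₆_cube_sub_g₉_sq, natDegree_C_mul (two_pow_mul_three_pow_ne_zero h2 h3 _ _)]
  compute_degree!

theorem natDegree_f₈_cube_sub_g₁₂_sq (h2 : (2 : R) ≠ 0) (h3 : (3 : R) ≠ 0) :
    (f₈ ^ 3 - g₁₂ ^ 2 : R[X]).natDegree = 5 := by
  rw [f₈_cube_sub_g₁₂_sq, natDegree_neg,
    natDegree_C_mul (two_pow_mul_three_pow_ne_zero h2 h3 _ _)]
  compute_degree!

end IsDomain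

end Davenport

theorem exists_f_g_deg_f_cubed_sub_g_squared_eq_general (k : Type*) [Field k]
    (h2 : (2 : k) ≠ 0) (h3 : (3 : k) ≠ 0)
    (M : ℕ) (hM : M = 3 ∨ M = 4) :
    ∃ f g : k[X], f.natDegree = 2 * M ∧ g.natDegree = 3 * M ∧ f ^ 3 ≠ g ^ 2 ∧
      (f ^ 3 - g ^ 2).natDegree = M + 1 := by
  rcases hM with rfl | rfl
  · have hD := Davenport.natDegree_f₆_cube_sub_g₉_sq h2 h3
    exact ⟨Davenport.f₆, Davenport.g₉, Davenport.natDegree_f₆, Davenport.natDegree_g₉,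
      ne_of_natDegree_sub_ne_zero (by rw [hD]; simp), hD⟩
  · have hD := Davenport.natDegree_f₈_cube_sub_g₁₂_sq h2 h3
    exact ⟨Davenport.f₈, Davenport.g₁₂, Davenport.natDegree_f₈, Davenport.natDegree_g₁₂,
      ne_of_natDegree_sub_ne_zero (by rw [hD]; simp), hD⟩

/-- If `k` is algebraically closed of characteristic different from 2 and 3 and `M = 3` or `4`,
then there exist `f, g ∈ k[T]` with `deg f = 2M`, `deg g = 3M`, `f³ ≠ g²` and
`deg(f³ - g²) = M + 1`. -/
theorem exists_f_g_deg_f_cubed_sub_g_squared_eq (k : Type*) [Field k] [IsAlgClosed k]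
    (h2 : (2 : k) ≠ 0) (h3 : (3 : k) ≠ 0)
    (M : ℕ) (hM : M = 3 ∨ M = 4) :
    ∃ f g : k[X], f.natDegree = 2 * M ∧ g.natDegree = 3 * M ∧ f ^ 3 ≠ g ^ 2 ∧
      (f ^ 3 - g ^ 2).natDegree = M + 1 :=
  exists_f_g_deg_f_cubed_sub_g_squared_eq_general k h2 h3 M hM
end

section
/- Let K be the field of rational functions ℚ(a, T) (the fraction field of ℚ[a, T]), and let W be the elliptic curve over K given by the Weierstrass equation Y² = X³ + AX² + BX + 1/4 with A = T⁴ + aT² + a²/4 and B = T² + a/2 (its discriminant (2T² + a − 3)(4T⁴ + (6 + 4a)T² + 9 + 3a + a²) is nonzero in K, so W is an elliptic curve). Then the affine points P₊ = (0, 1/2) and P₋ = (0, −1/2) lie on W and are 3-torsion points of the group W(K): each satisfies 3·P = O and P ≠ O, where O is the point at infinity. -/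
open WeierstrassCurve

/-- The field `ℚ(a, T)` of rational functions in two variables over `ℚ`. -/
noncomputable abbrev QaT : Type := FractionRing (MvPolynomial (Fin 2) ℚ)

/-- The image of `a` in `ℚ(a, T)`. -/
noncomputable def aQ : QaT := algebraMap (MvPolynomial (Fin 2) ℚ) QaT (MvPolynomial.X 0)

/-- The image of `T` in `ℚ(a, T)`. -/
noncomputable def TQ : QaT := algebraMap (MvPolynomial (Fin 2) ℚ) QaT (MvPolynomial.X 1)

/-- The Weierstrass curve `Y² = X³ + (T⁴ + aT² + a²/4)X² + (T² + a/2)X + 1/4` over `ℚ(a, T)`. -/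
noncomputable def W8 : WeierstrassCurve.Affine QaT :=
  { a₁ := 0
    a₂ := TQ ^ 4 + aQ * TQ ^ 2 + aQ ^ 2 / 4
    a₃ := 0
    a₄ := TQ ^ 2 + aQ / 2
    a₆ := 1 / 4 }

/-!
Both points are flexes. With `a₁ = a₃ = 0`, the tangent at `(0, y)` has slope `a₄ / (2y)`, whose
square is `a₂` exactly when `4 a₂ a₆ = a₄²`; for this curve `a₂ = a₄²` and `a₆ = 1/4`. The doubling
formula then gives `2P` the same `X`-coordinate `0` as `P`, so `2P = ±P`, and `2P = P` would force
`P = 0`. The discriminant is `(2T² + a)³ - 27`, which is nonzero at `a = T = 0`.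
-/

namespace WeierstrassCurve.Affine

variable {F : Type*} [Field F] {W : Affine F}

theorem Point.three_nsmul_some_eq_zero_of_addX_slope_eq [DecidableEq F] {x y : F}
    (h : W.Nonsingular x y) (hy : y ≠ W.negY x y) (hx : W.addX x x (W.slope x x y y) = x) :
    3 • Point.some _ _ h = 0 := by
  have hdouble := Point.add_self_of_Y_ne (h₁ := h) hy
  rcases (Point.X_eq_iff (h₂ := h)).mp hx with hP | hP <;> rw [← hdouble] at hP
  · exact absurd (add_eq_left.mp hP) (Point.some_ne_zero h)
  · rw [succ_nsmul, two_nsmul, hP, neg_add_cancel]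

section ZeroXCoordinate

variable [NeZero (2 : F)] {y : F}

theorem nonsingular_zero_of_sq_eq_a₆ (ha₁ : W.a₁ = 0) (ha₃ : W.a₃ = 0) (hy₀ : y ≠ 0)
    (hy : y ^ 2 = W.a₆) : W.Nonsingular 0 y := by
  rw [nonsingular_iff, equation_iff]
  refine ⟨by simp [ha₁, ha₃, hy], Or.inr ?_⟩
  simpa [ha₁, ha₃, eq_neg_iff_add_eq_zero, ← two_mul, two_ne_zero] using hy₀

theorem Point.three_nsmul_some_zero_eq_zero [DecidableEq F] (ha₁ : W.a₁ = 0) (ha₃ : W.a₃ = 0)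
    (hflex : 4 * W.a₂ * W.a₆ = W.a₄ ^ 2) (h : W.Nonsingular 0 y) (hy₀ : y ≠ 0) :
    3 • Point.some _ _ h = 0 := by
  have hy : y ^ 2 = W.a₆ := by
    simpa [equation_iff, ha₁, ha₃] using h.1
  have hneg : y ≠ W.negY 0 y := by
    simpa [ha₁, ha₃, eq_neg_iff_add_eq_zero, ← two_mul, two_ne_zero] using hy₀
  refine Point.three_nsmul_some_eq_zero_of_addX_slope_eq h hneg ?_
  have hslope : W.slope 0 0 y y = W.a₄ / (2 * y) := by
    rw [slope_of_Y_ne rfl hneg]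
    simp only [negY, ha₁, ha₃]
    ring
  rw [addX, hslope, ha₁]
  field_simp
  linear_combination -hflex - 4 * W.a₂ * hy

end ZeroXCoordinate

end WeierstrassCurve.Affine

open MvPolynomial WeierstrassCurve.Affine

theorem W8_four_a₂_a₆ : 4 * W8.a₂ * W8.a₆ = W8.a₄ ^ 2 := by
  simp only [W8]
  ring

theorem W8_Δ : W8.Δ = (2 * W8.a₄) ^ 3 - 27 := by
  simp only [WeierstrassCurve.Δ, b₂, b₄, b₆, b₈, W8]
  ring

theorem two_mul_W8_a₄ :
    2 * W8.a₄ = algebraMap (MvPolynomial (Fin 2) ℚ) QaT (2 * X 1 ^ 2 + X 0) := by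
  simp only [W8, TQ, aQ, map_add, map_mul, map_pow, map_ofNat]
  ring

theorem W8_Δ_ne_zero : W8.Δ ≠ 0 := by
  rw [W8_Δ, two_mul_W8_a₄, ← map_pow, ← map_ofNat (algebraMap (MvPolynomial (Fin 2) ℚ) QaT) 27,
    ← map_sub, ne_eq, map_eq_zero_iff _ (IsFractionRing.injective _ _)]
  intro h
  simpa [map_ofNat] using congrArg (eval 0) h

/-- The points `(0, 1/2)` and `(0, -1/2)` lie on the curve
`Y² = X³ + (T⁴ + aT² + a²/4)X² + (T² + a/2)X + 1/4` over `ℚ(a, T)` (whose discriminant is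
nonzero) and are 3-torsion points of its group of rational points. -/
theorem three_torsion_points_of_I18_family :
    ∃ (hp : WeierstrassCurve.Affine.Nonsingular W8 0 (1/2))
      (hm : WeierstrassCurve.Affine.Nonsingular W8 0 (-(1/2))),
      W8.Δ ≠ 0 ∧
      3 • (WeierstrassCurve.Affine.Point.some _ _ hp) = 0 ∧
      WeierstrassCurve.Affine.Point.some _ _ hp ≠ 0 ∧
      3 • (WeierstrassCurve.Affine.Point.some _ _ hm) = 0 ∧
      WeierstrassCurve.Affine.Point.some _ _ hm ≠ 0 := by
  have ha₁ : W8.a₁ = 0 := rfl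
  have ha₃ : W8.a₃ = 0 := rfl
  have hp₀ : (1 / 2 : QaT) ≠ 0 := by norm_num
  have hm₀ : (-(1 / 2) : QaT) ≠ 0 := by norm_num
  have hp := nonsingular_zero_of_sq_eq_a₆ ha₁ ha₃ hp₀ (by norm_num [W8])
  have hm := nonsingular_zero_of_sq_eq_a₆ ha₁ ha₃ hm₀ (by norm_num [W8])
  exact ⟨hp, hm, W8_Δ_ne_zero,
    Point.three_nsmul_some_zero_eq_zero ha₁ ha₃ W8_four_a₂_a₆ hp hp₀, Point.some_ne_zero hp,
    Point.three_nsmul_some_zero_eq_zero ha₁ ha₃ W8_four_a₂_a₆ hm hm₀, Point.some_ne_zero hm⟩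
end

section
/- Let R be a commutative ring and π ∈ R an element with π ∣ 2. Let W be a Weierstrass curve over R with coefficients a₁, a₂, a₃, a₄, a₆ such that π divides a₁ and a₂, π² divides a₃ and a₄, and π⁴ divides a₆. Then π⁸ divides the discriminant Δ of W. (This is the key divisibility underlying the lower bound on wild ramification for fibres of type I₀* in residue characteristic 2.) -/
/-!
Measure everything in powers of `π`. Since `π² ∣ 4`, the hypotheses give `π² ∣ b₂`, `π² ∣ b₄`,
`π⁴ ∣ b₆` and `π⁴ ∣ b₈`. Then every monomial of `Δ = -b₂²b₈ - 8b₄³ - 27b₆² + 9b₂b₄b₆` is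
divisible by `π⁸`, the term `8b₄³` because `π³ ∣ 8`.
-/

namespace WeierstrassCurve

variable {R : Type*} [CommRing R] {π : R} (W : WeierstrassCurve R)

theorem sq_dvd_b₂ (hπ : π ∣ 2) (h₁ : π ∣ W.a₁) : π ^ 2 ∣ W.b₂ := by
  obtain ⟨t, ht⟩ := hπ
  obtain ⟨c₁, hc₁⟩ := h₁
  refine ⟨c₁ ^ 2 + t ^ 2 * W.a₂, ?_⟩
  rw [b₂, hc₁, show (4 : R) = 2 ^ 2 by norm_num, ht]
  ring

theorem sq_dvd_b₄ (h₃ : π ^ 2 ∣ W.a₃) (h₄ : π ^ 2 ∣ W.a₄) : π ^ 2 ∣ W.b₄ := by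
  obtain ⟨c₃, hc₃⟩ := h₃
  obtain ⟨c₄, hc₄⟩ := h₄
  refine ⟨2 * c₄ + W.a₁ * c₃, ?_⟩
  rw [b₄, hc₃, hc₄]
  ring

theorem pow_four_dvd_b₆ (h₃ : π ^ 2 ∣ W.a₃) (h₆ : π ^ 4 ∣ W.a₆) : π ^ 4 ∣ W.b₆ := by
  obtain ⟨c₃, hc₃⟩ := h₃
  obtain ⟨c₆, hc₆⟩ := h₆
  refine ⟨c₃ ^ 2 + 4 * c₆, ?_⟩
  rw [b₆, hc₃, hc₆]
  ring

theorem pow_four_dvd_b₈ (h₃ : π ^ 2 ∣ W.a₃) (h₄ : π ^ 2 ∣ W.a₄) (h₆ : π ^ 4 ∣ W.a₆) :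
    π ^ 4 ∣ W.b₈ := by
  obtain ⟨c₃, hc₃⟩ := h₃
  obtain ⟨c₄, hc₄⟩ := h₄
  obtain ⟨c₆, hc₆⟩ := h₆
  refine ⟨W.a₁ ^ 2 * c₆ + 4 * W.a₂ * c₆ - W.a₁ * c₃ * c₄ + W.a₂ * c₃ ^ 2 - c₄ ^ 2, ?_⟩
  rw [b₈, hc₃, hc₄, hc₆]
  ring

theorem pow_eight_dvd_Δ (hπ : π ∣ 2) (hb₂ : π ^ 2 ∣ W.b₂) (hb₄ : π ^ 2 ∣ W.b₄)
    (hb₆ : π ^ 4 ∣ W.b₆) (hb₈ : π ^ 4 ∣ W.b₈) : π ^ 8 ∣ W.Δ := by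
  obtain ⟨t, ht⟩ := hπ
  obtain ⟨c₂, hc₂⟩ := hb₂
  obtain ⟨c₄, hc₄⟩ := hb₄
  obtain ⟨c₆, hc₆⟩ := hb₆
  obtain ⟨c₈, hc₈⟩ := hb₈
  refine ⟨-c₂ ^ 2 * c₈ - π * t ^ 3 * c₄ ^ 3 - 27 * c₆ ^ 2 + 9 * c₂ * c₄ * c₆, ?_⟩
  rw [Δ, hc₂, hc₄, hc₆, hc₈, show (8 : R) = 2 ^ 3 by norm_num, ht]
  ring

end WeierstrassCurve

theorem pow_eight_dvd_discriminant_general (R : Type*) [CommRing R] (π : R) (hπ : π ∣ 2)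
    (W : WeierstrassCurve R) (h1 : π ∣ W.a₁) (h3 : π ^ 2 ∣ W.a₃)
    (h4 : π ^ 2 ∣ W.a₄) (h6 : π ^ 4 ∣ W.a₆) :
    π ^ 8 ∣ W.Δ :=
  W.pow_eight_dvd_Δ hπ (W.sq_dvd_b₂ hπ h1) (W.sq_dvd_b₄ h3 h4) (W.pow_four_dvd_b₆ h3 h6)
    (W.pow_four_dvd_b₈ h3 h4 h6)

/-- If `π ∣ 2` and, for a Weierstrass curve, `π ∣ a₁, a₂`, `π² ∣ a₃, a₄` and `π⁴ ∣ a₆`, then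
`π⁸` divides the discriminant.  This underlies the lower bound on wild ramification for
fibres of type `I₀*` in residue characteristic 2. -/
theorem pow_eight_dvd_discriminant (R : Type*) [CommRing R] (π : R) (hπ : π ∣ 2)
    (W : WeierstrassCurve R) (h1 : π ∣ W.a₁) (h2 : π ∣ W.a₂) (h3 : π ^ 2 ∣ W.a₃)
    (h4 : π ^ 2 ∣ W.a₄) (h6 : π ^ 4 ∣ W.a₆) :
    π ^ 8 ∣ W.Δ :=
  pow_eight_dvd_discriminant_general R π hπ W h1 h3 h4 h6
end

section
/- Let k be a field of characteristic 19. In k[T], set f = T⁷(T − 1) and g = T(T − 1)¹¹, so that deg(f) = 8 = 2M and deg(g) = 12 = 3M with M = 4. Then f³ − g² = T²(T − 1)³; in particular deg(f³ − g²) = 5 = M + 1. (This witnesses the sharpness of the degree bound deg(f³ − g²) ≥ M + 1 in characteristic 19, corresponding to the unique elliptic K3 surface Y² = X³ − 3T⁷(T − 1)X + 2T(T − 1)¹¹ with a fibre of type I₁₉ in characteristic 19.) -/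
/-!
With `a = T` and `b = T − 1` one has the ring identity `(a⁷b)³ − (ab¹¹)² = a²b³(a¹⁹ − b¹⁹)`,
and in characteristic 19 Frobenius gives `T¹⁹ − (T − 1)¹⁹ = 1`.
-/

open Polynomial

theorem pow_seven_mul_cube_sub_mul_pow_eleven_sq {R : Type*} [CommRing R] (a b : R) :
    (a ^ 7 * b) ^ 3 - (a * b ^ 11) ^ 2 = a ^ 2 * b ^ 3 * (a ^ 19 - b ^ 19) := by
  ring

theorem Polynomial.X_pow_char_sub_X_sub_one_pow_char {R : Type*} [CommRing R] (p : ℕ)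
    [Fact p.Prime] [CharP R p] : (X : R[X]) ^ p - (X - 1) ^ p = 1 := by
  rw [sub_pow_char, one_pow, sub_sub_cancel]

theorem Polynomial.natDegree_X_pow_mul_X_sub_one_pow {R : Type*} [CommRing R] [Nontrivial R]
    (m n : ℕ) : ((X : R[X]) ^ m * (X - 1) ^ n).natDegree = m + n := by
  have hX1 : (X - C 1 : R[X]).Monic := monic_X_sub_C 1
  rw [← C_1, (monic_X_pow m).natDegree_mul (hX1.pow n), natDegree_X_pow, hX1.natDegree_pow,
    natDegree_X_sub_C, mul_one]

/-- In characteristic 19, with `f = T⁷(T − 1)` and `g = T(T − 1)¹¹` (of degrees `8 = 2M` and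
`12 = 3M` for `M = 4`), one has `f³ − g² = T²(T − 1)³`, of degree `5 = M + 1`.  This
witnesses the sharpness of the bound `deg(f³ − g²) ≥ M + 1` in characteristic 19. -/
theorem f_cubed_sub_g_squared_char_19 (k : Type*) [Field k] [CharP k 19]
    (f g : k[X]) (hf : f = X ^ 7 * (X - 1)) (hg : g = X * (X - 1) ^ 11) :
    f.natDegree = 2 * 4 ∧ g.natDegree = 3 * 4 ∧
      f ^ 3 - g ^ 2 = X ^ 2 * (X - 1) ^ 3 ∧ (f ^ 3 - g ^ 2).natDegree = 4 + 1 := by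
  have : Fact (Nat.Prime 19) := ⟨by norm_num⟩
  have hdiff : f ^ 3 - g ^ 2 = X ^ 2 * (X - 1) ^ 3 := by
    rw [hf, hg, pow_seven_mul_cube_sub_mul_pow_eleven_sq, X_pow_char_sub_X_sub_one_pow_char,
      mul_one]
  refine ⟨?_, ?_, hdiff, ?_⟩
  · simpa [hf] using natDegree_X_pow_mul_X_sub_one_pow (R := k) 7 1
  · simpa [hg] using natDegree_X_pow_mul_X_sub_one_pow (R := k) 1 11
  · rw [hdiff, natDegree_X_pow_mul_X_sub_one_pow]
end

section
/- Let k be a field of characteristic 7. In k[T], set f = (T + 1)³(T − 1)³ and g = T⁷(T + 1)(T − 1), so that deg(f) = 6 = 2M and deg(g) = 9 = 3M with M = 3. Then f³ − g² = −((T² − 1))²; in particular deg(f³ − g²) = 4 = M + 1. (This witnesses the sharpness of the degree bound deg(f³ − g²) ≥ M + 1 in characteristic 7, corresponding to the unique elliptic K3 surface Y² = X³ − 3(T + 1)³(T − 1)³X − 2T⁷(T + 1)(T − 1) with a fibre of type I₁₄* in characteristic 7.) -/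
/-!
Both polynomials share the factor `T² − 1`: `f = (T² − 1)³` and `g = T⁷(T² − 1)`, so
`f³ − g² = (T² − 1)²((T² − 1)⁷ − T¹⁴)`, and in characteristic 7 the Frobenius gives
`(T² − 1)⁷ = T¹⁴ − 1`.
-/

open Polynomial

theorem cube_sub_sq_eq_neg_sq_of_charP_seven {R : Type*} [CommRing R] [CharP R 7] (a : R) :
    ((a + 1) ^ 3 * (a - 1) ^ 3) ^ 3 - (a ^ 7 * (a + 1) * (a - 1)) ^ 2 = -((a ^ 2 - 1) ^ 2) := by
  have : Fact (Nat.Prime 7) := ⟨by norm_num⟩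
  have frobenius : (a ^ 2 - 1) ^ 7 = a ^ 14 - 1 := by
    rw [sub_pow_char, one_pow, ← pow_mul]
  linear_combination (a ^ 2 - 1) ^ 2 * frobenius

/-- In characteristic 7, with `f = (T + 1)³(T − 1)³` and `g = T⁷(T + 1)(T − 1)` (of degrees
`6 = 2M` and `9 = 3M` for `M = 3`), one has `f³ − g² = −(T² − 1)²`, of degree `4 = M + 1`.
This witnesses the sharpness of the bound `deg(f³ − g²) ≥ M + 1` in characteristic 7. -/
theorem f_cubed_sub_g_squared_char_7 (k : Type*) [Field k] [CharP k 7]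
    (f g : k[X]) (hf : f = (X + 1) ^ 3 * (X - 1) ^ 3) (hg : g = X ^ 7 * (X + 1) * (X - 1)) :
    f.natDegree = 2 * 3 ∧ g.natDegree = 3 * 3 ∧
      f ^ 3 - g ^ 2 = -((X ^ 2 - 1) ^ 2) ∧ (f ^ 3 - g ^ 2).natDegree = 3 + 1 := by
  subst hf hg
  have key := cube_sub_sq_eq_neg_sq_of_charP_seven (X : k[X])
  refine ⟨by compute_degree!, by compute_degree!, key, ?_⟩
  rw [key, natDegree_neg, natDegree_pow, ← C_1, natDegree_X_pow_sub_C]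
end

section
/- Let k be an algebraically closed field of characteristic 2, let λ ∈ k with λ ≠ 0, and let K = k(T) be the rational function field. Consider the two Weierstrass curves over K: W₁ given by Y² + XY = X³ + (λT + 1/T³)X² + (T³ + 1)/T¹², and W₂ given by Y² + TXY + Y = X³ + λT³X² + λT. Then W₁ and W₂ are isomorphic over K: there exists an admissible change of variables (u, r, s, t) with u ∈ K×, r, s, t ∈ K transforming W₁ into W₂. (W₂ is the minimal model of the twisted curve W₁; it is the elliptic K3 surface with a fibre of type I₁₃* in characteristic 2.) -/
/-!
The change of variables with `u = 1/T`, `r = 1/T³`, `s = 0`, `t = 1/T⁶`, i.e.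
`X ↦ X/T² + 1/T³`, `Y ↦ Y/T³ + 1/T⁶`, clears the poles of `W₁` at `T = 0`. With `s = 0` and
`2 = 0` the transformation formulas lose all their cross terms, and the remaining terms cancel in
pairs, leaving exactly the coefficients of `W₂`.
-/

namespace WeierstrassCurve

lemma variableChange_of_s_eq_zero_of_charTwo {R : Type*} [CommRing R] [CharP R 2]
    (W : WeierstrassCurve R) (u : Rˣ) (r t : R) :
    (⟨u, r, 0, t⟩ : VariableChange R) • W =
      { a₁ := ↑u⁻¹ * W.a₁
        a₂ := ↑u⁻¹ ^ 2 * (W.a₂ + r)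
        a₃ := ↑u⁻¹ ^ 3 * (W.a₃ + r * W.a₁)
        a₄ := ↑u⁻¹ ^ 4 * (W.a₄ + t * W.a₁ + r ^ 2)
        a₆ := ↑u⁻¹ ^ 6 * (W.a₆ + r * W.a₄ + r ^ 2 * W.a₂ + r ^ 3 + t * W.a₃ + t ^ 2
          + r * t * W.a₁) } := by
  have h2 : (2 : R) = 0 := CharTwo.two_eq_zero
  ext
  · simp [variableChange_a₁]
  · rw [variableChange_a₂]
    linear_combination (↑u⁻¹ ^ 2 * r) * h2
  · rw [variableChange_a₃]
    linear_combination (↑u⁻¹ ^ 3 * t) * h2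
  · rw [variableChange_a₄]
    linear_combination (↑u⁻¹ ^ 4 * (r * W.a₂ - t * W.a₁ + r ^ 2)) * h2
  · rw [variableChange_a₆]
    linear_combination (-↑u⁻¹ ^ 6 * (t * W.a₃ + t ^ 2 + r * t * W.a₁)) * h2

section I13Star

variable {F : Type*} [Field F]

def i13StarTwist (T c : F) : WeierstrassCurve F :=
  ⟨1, c * T + 1 / T ^ 3, 0, 0, (T ^ 3 + 1) / T ^ 12⟩

def i13StarMinimal (T c : F) : WeierstrassCurve F :=
  ⟨T, c * T ^ 3, 1, 0, c * T⟩

def i13StarMinimizingChange {T : F} (hT : T ≠ 0) : VariableChange F :=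
  ⟨(Units.mk0 T hT)⁻¹, T⁻¹ ^ 3, 0, T⁻¹ ^ 6⟩

lemma i13StarMinimizingChange_smul_i13StarTwist [CharP F 2] {T : F} (hT : T ≠ 0) (c : F) :
    i13StarMinimizingChange hT • i13StarTwist T c = i13StarMinimal T c := by
  have h2 : (2 : F) = 0 := CharTwo.two_eq_zero
  rw [i13StarMinimizingChange, variableChange_of_s_eq_zero_of_charTwo]
  simp only [i13StarTwist, i13StarMinimal, inv_inv, Units.val_mk0, mk.injEq]
  refine ⟨by ring, ?_, ?_, ?_, ?_⟩ <;> field_simp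
  · linear_combination h2
  · ring
  · linear_combination h2
  · linear_combination (2 * T ^ 3 + 1) * h2

end I13Star

end WeierstrassCurve

open WeierstrassCurve in
theorem I13_star_twist_minimal_model_general (k : Type*) [Field k] [CharP k 2]
    (lam : k)
    (W₁ W₂ : WeierstrassCurve (RatFunc k))
    (h₁a₁ : W₁.a₁ = 1)
    (h₁a₂ : W₁.a₂ = algebraMap k (RatFunc k) lam * RatFunc.X + 1 / RatFunc.X ^ 3)
    (h₁a₃ : W₁.a₃ = 0) (h₁a₄ : W₁.a₄ = 0)
    (h₁a₆ : W₁.a₆ = (RatFunc.X ^ 3 + 1) / RatFunc.X ^ 12)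
    (h₂a₁ : W₂.a₁ = RatFunc.X)
    (h₂a₂ : W₂.a₂ = algebraMap k (RatFunc k) lam * RatFunc.X ^ 3)
    (h₂a₃ : W₂.a₃ = 1) (h₂a₄ : W₂.a₄ = 0)
    (h₂a₆ : W₂.a₆ = algebraMap k (RatFunc k) lam * RatFunc.X) :
    ∃ C : WeierstrassCurve.VariableChange (RatFunc k), C • W₁ = W₂ := by
  set c := algebraMap k (RatFunc k) lam
  have hW₁ : W₁ = i13StarTwist RatFunc.X c := WeierstrassCurve.ext h₁a₁ h₁a₂ h₁a₃ h₁a₄ h₁a₆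
  have hW₂ : W₂ = i13StarMinimal RatFunc.X c := WeierstrassCurve.ext h₂a₁ h₂a₂ h₂a₃ h₂a₄ h₂a₆
  rw [hW₁, hW₂]
  exact ⟨_, i13StarMinimizingChange_smul_i13StarTwist RatFunc.X_ne_zero c⟩

/-- Over `K = k(T)` with `k` algebraically closed of characteristic 2 and `λ ≠ 0`, the
Weierstrass curves `W₁ : Y² + XY = X³ + (λT + 1/T³)X² + (T³ + 1)/T¹²` and
`W₂ : Y² + TXY + Y = X³ + λT³X² + λT` are isomorphic over `K` via an admissible change of
variables; `W₂` is the minimal model, the elliptic K3 surface with a fibre of type `I₁₃*`. -/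
theorem I13_star_twist_minimal_model (k : Type*) [Field k] [IsAlgClosed k] [CharP k 2]
    (lam : k) (hlam : lam ≠ 0)
    (W₁ W₂ : WeierstrassCurve (RatFunc k))
    (h₁a₁ : W₁.a₁ = 1)
    (h₁a₂ : W₁.a₂ = algebraMap k (RatFunc k) lam * RatFunc.X + 1 / RatFunc.X ^ 3)
    (h₁a₃ : W₁.a₃ = 0) (h₁a₄ : W₁.a₄ = 0)
    (h₁a₆ : W₁.a₆ = (RatFunc.X ^ 3 + 1) / RatFunc.X ^ 12)
    (h₂a₁ : W₂.a₁ = RatFunc.X)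
    (h₂a₂ : W₂.a₂ = algebraMap k (RatFunc k) lam * RatFunc.X ^ 3)
    (h₂a₃ : W₂.a₃ = 1) (h₂a₄ : W₂.a₄ = 0)
    (h₂a₆ : W₂.a₆ = algebraMap k (RatFunc k) lam * RatFunc.X) :
    ∃ C : WeierstrassCurve.VariableChange (RatFunc k), C • W₁ = W₂ :=
  I13_star_twist_minimal_model_general k lam W₁ W₂ h₁a₁ h₁a₂ h₁a₃ h₁a₄ h₁a₆ h₂a₁ h₂a₂ h₂a₃ h₂a₄ h₂a₆
end
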